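/- For any fixed square spectral factor W̄_Ψ of Ψ, the Hellinger distance satisfies d_H(Φ, Ψ) = inf{ ‖W̄_Ψ − W_Φ‖₂ : W_Φ ∈ L₂^{m×m}(𝕋), W_Φ W_Φ* = Φ }; i.e., fixing one factor and minimizing only over factors of Φ gives the same value as minimizing over both factors. -/

import Mathlib

open Matrix MeasureTheory
open scoped ComplexOrder

/-- Normalized Lebesgue measure dθ/2π on one period, modeling the unit circle. -/
noncomputable def muT : Measure ℝ :=
  (ENNReal.ofReal (2 * Real.pi)⁻¹) • (volume.restrict (Set.Ioc 0 (2 * Real.pi)))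

/-- Bounded coercive Hermitian-valued spectral density on the circle. -/
def IsSpecDens {m : ℕ} (Φ : ℝ → Matrix (Fin m) (Fin m) ℂ) : Prop :=
  (∀ i j, Measurable fun θ => Φ θ i j) ∧ Function.Periodic Φ (2 * Real.pi) ∧
  (∀ θ, (Φ θ).IsHermitian) ∧ (∃ C : ℝ, ∀ θ i j, ‖Φ θ i j‖ ≤ C) ∧
  (∃ c : ℝ, 0 < c ∧ ∀ θ, ((Φ θ) - c • (1 : Matrix (Fin m) (Fin m) ℂ)).PosSemidef)

/-- W is a square spectral factor of Φ lying in L₂^{m×m}(𝕋). -/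
def IsFactor {m : ℕ} (W Φ : ℝ → Matrix (Fin m) (Fin m) ℂ) : Prop :=
  (∀ i j, Measurable fun θ => W θ i j) ∧
  Integrable (fun θ => ((W θ) * (W θ)ᴴ).trace.re) muT ∧
  (∀ᵐ θ ∂muT, (W θ) * (W θ)ᴴ = Φ θ)

/-- The L₂ norm of a matrix-valued function: ‖W‖₂ = (tr ∫ W W*)^{1/2}. -/
noncomputable def normL2 {m : ℕ} (W : ℝ → Matrix (Fin m) (Fin m) ℂ) : ℝ :=
  Real.sqrt (∫ θ, ((W θ) * (W θ)ᴴ).trace.re ∂muT)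

/-- The multivariable Hellinger distance. -/
noncomputable def dH {m : ℕ} (Φ Ψ : ℝ → Matrix (Fin m) (Fin m) ℂ) : ℝ :=
  sInf {r : ℝ | ∃ WΦ WΨ, IsFactor WΦ Φ ∧ IsFactor WΨ Ψ ∧
    r = normL2 (fun θ => WΦ θ - WΨ θ)}

/-!
If `B` and `W` are square factors of the same density `S` (invertible because `Ψ` is coercive),
then `U = B⁻¹ W` is unitary and `B = W Uᴴ`. Hence, given factors `WΦ, WΨ` of `Φ, Ψ` and the fixed
factor `W̄` of `Ψ`, the pointwise rotation `U = W̄⁻¹ WΨ` (measurable, unitary a.e.) turns `WΦ Uᴴ`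
into a factor of `Φ` with `W̄ - WΦ Uᴴ = (WΨ - WΦ) Uᴴ`, whose `L₂` norm is that of `WΦ - WΨ`.
So both infima range over the same set of values.
-/

section EntrywiseMeasurable

variable {α n : Type*} [MeasurableSpace α] {A B : α → Matrix n n ℂ}

lemma measurable_det_of_entries [Fintype n] [DecidableEq n] (hA : ∀ i j, Measurable fun x => A x i j) :
    Measurable fun x => (A x).det := by
  simp_rw [Matrix.det_apply']
  exact Finset.measurable_sum _ fun σ _ =>
    (Finset.measurable_prod _ fun i _ => hA _ _).const_mul _

lemma measurable_mul_entries [Fintype n] (hA : ∀ i j, Measurable fun x => A x i j)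
    (hB : ∀ i j, Measurable fun x => B x i j) (i j : n) :
    Measurable fun x => (A x * B x) i j := by
  simp_rw [Matrix.mul_apply]
  exact Finset.measurable_sum _ fun k _ => (hA i k).mul (hB k j)

lemma measurable_conjTranspose_entries (hA : ∀ i j, Measurable fun x => A x i j) (i j : n) :
    Measurable fun x => (A x)ᴴ i j := by
  simp_rw [Matrix.conjTranspose_apply]
  exact continuous_star.measurable.comp (hA j i)

lemma measurable_inv_entries [Fintype n] [DecidableEq n] (hA : ∀ i j, Measurable fun x => A x i j) (i j : n) :
    Measurable fun x => (A x)⁻¹ i j := by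
  simp_rw [Matrix.inv_def, Matrix.smul_apply, smul_eq_mul, Ring.inverse_eq_inv,
    Matrix.adjugate_apply]
  refine (measurable_det_of_entries hA).inv.mul (measurable_det_of_entries fun a b => ?_)
  by_cases hab : a = j
  · simp [Matrix.updateRow_apply, hab]
  · simpa [Matrix.updateRow_apply, hab] using hA a b

end EntrywiseMeasurable

section MatrixFactors

variable {n R : Type*} [Fintype n] [CommRing R] [StarRing R]

lemma Matrix.mul_conjTranspose_eq_of_isometry [DecidableEq n] (A U : Matrix n n R) (hU : Uᴴ * U = 1) :
    (A * Uᴴ) * (A * Uᴴ)ᴴ = A * Aᴴ := by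
  rw [Matrix.conjTranspose_mul, Matrix.conjTranspose_conjTranspose, Matrix.mul_assoc,
    ← Matrix.mul_assoc Uᴴ, hU, Matrix.one_mul]

lemma Matrix.sub_mul_conjTranspose_sub_comm (A B : Matrix n n R) :
    (A - B) * (A - B)ᴴ = (B - A) * (B - A)ᴴ := by
  rw [← neg_sub B A, Matrix.conjTranspose_neg, neg_mul_neg]

lemma Matrix.isometry_inv_mul_of_mul_conjTranspose_eq [DecidableEq n] {B W : Matrix n n R}
    (hB : IsUnit B.det) (hBW : W * Wᴴ = B * Bᴴ) :
    (B⁻¹ * W)ᴴ * (B⁻¹ * W) = 1 ∧ W * (B⁻¹ * W)ᴴ = B := by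
  have hBH : IsUnit Bᴴ.det := by rw [Matrix.det_conjTranspose]; exact hB.star
  have hrot : W * (B⁻¹ * W)ᴴ = B := by
    rw [Matrix.conjTranspose_mul, Matrix.conjTranspose_nonsing_inv, ← Matrix.mul_assoc, hBW,
      Matrix.mul_assoc, Matrix.mul_nonsing_inv _ hBH, Matrix.mul_one]
  refine ⟨mul_eq_one_comm.mp ?_, hrot⟩
  rw [Matrix.mul_assoc, hrot, Matrix.nonsing_inv_mul _ hB]

end MatrixFactors

section Factors

variable {m : ℕ}

lemma IsSpecDens.isUnit_det {Ψ : ℝ → Matrix (Fin m) (Fin m) ℂ} (hΨ : IsSpecDens Ψ) (θ : ℝ) :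
    IsUnit (Ψ θ).det := by
  obtain ⟨c, hc, hcoer⟩ := hΨ.2.2.2.2
  have hpos : (Ψ θ).PosDef := by
    simpa using Matrix.PosDef.posSemidef_add (hcoer θ) (Matrix.PosDef.one.smul hc)
  exact hpos.det_pos.ne'.isUnit

lemma IsFactor.isUnit_det {W Ψ : ℝ → Matrix (Fin m) (Fin m) ℂ} (hW : IsFactor W Ψ)
    (hΨ : IsSpecDens Ψ) : ∀ᵐ θ ∂muT, IsUnit (W θ).det := by
  filter_upwards [hW.2.2] with θ hθ
  have hdet : (W θ).det * (W θ)ᴴ.det = (Ψ θ).det := by rw [← Matrix.det_mul, hθ]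
  exact isUnit_of_mul_isUnit_left (hdet ▸ hΨ.isUnit_det θ)

lemma IsFactor.mul_conjTranspose_isometry {W Φ U : ℝ → Matrix (Fin m) (Fin m) ℂ}
    (hW : IsFactor W Φ) (hUmeas : ∀ i j, Measurable fun θ => U θ i j)
    (hU : ∀ᵐ θ ∂muT, (U θ)ᴴ * U θ = 1) : IsFactor (fun θ => W θ * (U θ)ᴴ) Φ := by
  have hgram : ∀ᵐ θ ∂muT, (W θ * (U θ)ᴴ) * (W θ * (U θ)ᴴ)ᴴ = W θ * (W θ)ᴴ := by
    filter_upwards [hU] with θ hθ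
    exact Matrix.mul_conjTranspose_eq_of_isometry _ _ hθ
  refine ⟨measurable_mul_entries hW.1 (measurable_conjTranspose_entries hUmeas), ?_, ?_⟩
  · exact hW.2.1.congr (by filter_upwards [hgram] with θ hθ; rw [hθ])
  · filter_upwards [hgram, hW.2.2] with θ hθ hWθ
    rw [hθ, hWθ]

lemma normL2_congr_ae {W V : ℝ → Matrix (Fin m) (Fin m) ℂ}
    (h : ∀ᵐ θ ∂muT, W θ * (W θ)ᴴ = V θ * (V θ)ᴴ) : normL2 W = normL2 V := by
  unfold normL2
  congr 1
  exact integral_congr_ae (by filter_upwards [h] with θ hθ; rw [hθ])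

lemma normL2_sub_comm (W V : ℝ → Matrix (Fin m) (Fin m) ℂ) :
    normL2 (fun θ => W θ - V θ) = normL2 (fun θ => V θ - W θ) :=
  normL2_congr_ae (.of_forall fun _ => Matrix.sub_mul_conjTranspose_sub_comm _ _)

lemma exists_factor_normL2_sub_eq {Φ Ψ WΦ WΨ WΨbar : ℝ → Matrix (Fin m) (Fin m) ℂ}
    (hΨ : IsSpecDens Ψ) (hWΦ : IsFactor WΦ Φ) (hWΨ : IsFactor WΨ Ψ)
    (hWΨbar : IsFactor WΨbar Ψ) :
    ∃ W, IsFactor W Φ ∧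
      normL2 (fun θ => WΨbar θ - W θ) = normL2 (fun θ => WΦ θ - WΨ θ) := by
  set U : ℝ → Matrix (Fin m) (Fin m) ℂ := fun θ => (WΨbar θ)⁻¹ * WΨ θ
  have hU : ∀ᵐ θ ∂muT, (U θ)ᴴ * U θ = 1 ∧ WΨ θ * (U θ)ᴴ = WΨbar θ := by
    filter_upwards [hWΨbar.isUnit_det hΨ, hWΨ.2.2, hWΨbar.2.2] with θ hdet h h'
    exact Matrix.isometry_inv_mul_of_mul_conjTranspose_eq hdet (h.trans h'.symm)
  have hUmeas : ∀ i j, Measurable fun θ => U θ i j :=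
    measurable_mul_entries (measurable_inv_entries hWΨbar.1) hWΨ.1
  refine ⟨fun θ => WΦ θ * (U θ)ᴴ,
    hWΦ.mul_conjTranspose_isometry hUmeas (hU.mono fun _ h => h.1), ?_⟩
  rw [normL2_sub_comm WΦ]
  refine normL2_congr_ae ?_
  filter_upwards [hU] with θ ⟨hiso, hrot⟩
  rw [← hrot, ← Matrix.sub_mul, Matrix.mul_conjTranspose_eq_of_isometry _ _ hiso]

end Factors

theorem stmt_13_general {m : ℕ} (Φ Ψ : ℝ → Matrix (Fin m) (Fin m) ℂ)
    (hΨ : IsSpecDens Ψ)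
    (WΨbar : ℝ → Matrix (Fin m) (Fin m) ℂ) (hWΨbar : IsFactor WΨbar Ψ) :
    dH Φ Ψ = sInf {r : ℝ | ∃ WΦ, IsFactor WΦ Φ ∧
      r = normL2 (fun θ => WΨbar θ - WΦ θ)} := by
  rw [dH]
  congr 1
  ext r
  constructor
  · rintro ⟨WΦ, WΨ, hWΦ, hWΨ, rfl⟩
    obtain ⟨W, hW, hnorm⟩ := exists_factor_normL2_sub_eq hΨ hWΦ hWΨ hWΨbar
    exact ⟨W, hW, hnorm.symm⟩
  · rintro ⟨WΦ, hWΦ, rfl⟩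
    exact ⟨WΦ, WΨbar, hWΦ, hWΨbar, normL2_sub_comm _ _⟩

theorem stmt_13 {m : ℕ} (Φ Ψ : ℝ → Matrix (Fin m) (Fin m) ℂ)
    (hΦ : IsSpecDens Φ) (hΨ : IsSpecDens Ψ)
    (WΨbar : ℝ → Matrix (Fin m) (Fin m) ℂ) (hWΨbar : IsFactor WΨbar Ψ) :
    dH Φ Ψ = sInf {r : ℝ | ∃ WΦ, IsFactor WΦ Φ ∧
      r = normL2 (fun θ => WΨbar θ - WΦ θ)} :=
  stmt_13_general Φ Ψ hΨ WΨbar hWΨbar
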